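/- Let g₁, g₂ : ℝ → ℝ and let ξ : ℝ → ℝ² be differentiable with ξ(t) ≠ 0 for all t and dξ/dt (t) = ( g₁(‖ξ(t)‖) I + g₂(‖ξ(t)‖) J ) ξ(t), where I is the 2×2 identity matrix and J = [[0, −1], [1, 0]]. Then r(t) := ‖ξ(t)‖ is differentiable and satisfies dr/dt (t) = g₁(r(t)) r(t) for all t. -/

import Mathlib

/-!
The rotational part is skew-symmetric, so `⟪ξ, Jξ⟫ = 0` and `⟪ξ, ξ'⟫ = g₁(‖ξ‖) ‖ξ‖²`.
Since `ξ` never vanishes, `‖ξ‖` is differentiable with derivative `⟪ξ, ξ'⟫ / ‖ξ‖ = g₁(‖ξ‖) ‖ξ‖`.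
-/

open Matrix RealInnerProductSpace

theorem HasDerivAt.norm {E : Type*} [NormedAddCommGroup E] [InnerProductSpace ℝ E]
    {f : ℝ → E} {f' : E} {x : ℝ} (hf : HasDerivAt f f' x) (h0 : f x ≠ 0) :
    HasDerivAt (fun y => ‖f y‖) (⟪f x, f'⟫ / ‖f x‖) x := by
  have hsq : ‖f x‖ ^ 2 ≠ 0 := by positivity
  convert hf.norm_sq.sqrt hsq using 1
  · simp only [Real.sqrt_sq (norm_nonneg _)]
  · rw [Real.sqrt_sq (norm_nonneg _)]
    ring

namespace Matrix

variable {n : Type*} [Fintype n] [DecidableEq n]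

theorem inner_toEuclideanLin_self_eq_zero_of_transpose_eq_neg {A : Matrix n n ℝ}
    (hA : Aᵀ = -A) (x : EuclideanSpace ℝ n) : ⟪x, A.toEuclideanLin x⟫ = 0 := by
  have h : ⟪x, A.toEuclideanLin x⟫ = -⟪x, A.toEuclideanLin x⟫ :=
    calc ⟪x, A.toEuclideanLin x⟫ = ⟪Aᵀ.toEuclideanLin x, x⟫ := by
          rw [← conjTranspose_eq_transpose_of_trivial, toEuclideanLin_conjTranspose_eq_adjoint,
            LinearMap.adjoint_inner_left]
      _ = -⟪x, A.toEuclideanLin x⟫ := by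
          rw [hA, map_neg, LinearMap.neg_apply, inner_neg_left, real_inner_comm]
  linarith

theorem inner_toEuclideanLin_smul_one_add_smul_self {A : Matrix n n ℝ} (hA : Aᵀ = -A)
    (a b : ℝ) (x : EuclideanSpace ℝ n) :
    ⟪x, (a • 1 + b • A).toEuclideanLin x⟫ = a * ‖x‖ ^ 2 := by
  rw [map_add, map_smul, map_smul, toLpLin_one, LinearMap.add_apply, LinearMap.smul_apply,
    LinearMap.smul_apply, inner_add_right, real_inner_smul_right, real_inner_smul_right,
    inner_toEuclideanLin_self_eq_zero_of_transpose_eq_neg hA, LinearMap.id_apply,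
    real_inner_self_eq_norm_sq, mul_zero, add_zero]

theorem transpose_quarterTurn :
    (!![0, -1; 1, 0] : Matrix (Fin 2) (Fin 2) ℝ)ᵀ = -!![0, -1; 1, 0] := by
  ext i j
  fin_cases i <;> fin_cases j <;> simp

end Matrix

theorem cartesian_to_radial_oscillation_model (g₁ g₂ : ℝ → ℝ)
    (ξ : ℝ → EuclideanSpace ℝ (Fin 2)) (hξ0 : ∀ t : ℝ, ξ t ≠ 0)
    (hξ : ∀ t : ℝ, HasDerivAt ξ
      (Matrix.toEuclideanLin
        ((g₁ ‖ξ t‖) • (1 : Matrix (Fin 2) (Fin 2) ℝ)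
          + (g₂ ‖ξ t‖) • (!![0, -1; 1, 0] : Matrix (Fin 2) (Fin 2) ℝ))
        (ξ t)) t) :
    ∀ t : ℝ, HasDerivAt (fun s : ℝ => ‖ξ s‖) (g₁ ‖ξ t‖ * ‖ξ t‖) t := by
  intro t
  convert (hξ t).norm (hξ0 t) using 1
  rw [inner_toEuclideanLin_smul_one_add_smul_self transpose_quarterTurn]
  field_simp
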